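/- arXiv:math/0007115 — 2 statements merged into one kernel-verified Lean document; each statement's English description precedes it below -/
import Mathlib

section
/- Let X and Y be exceptional objects of 𝒞 with Hom(Y, X[r]) = 0 for all r ∈ ℤ (i.e., (X,Y) is an exceptional pair). Then T_X(Y) is an exceptional object of 𝒞. -/
set_option linter.unusedSectionVars false


open CategoryTheory Category Limits Pretriangulated

universe v u

namespace CategoryTheory.Triangulated

/-- The structure `Triangulated.Subcategory` of the older Mathlib (removed since),
restated here with its old fields. -/
structure Subcategory (C : Type u) [Category.{v} C] [HasZeroObject C] [HasShift C ℤ]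
    [Preadditive C] [∀ n : ℤ, (shiftFunctor C n).Additive] [Pretriangulated C] where
  P : C → Prop
  zero' : ∃ (Z : C) (_ : IsZero Z), P Z
  shift (X : C) (n : ℤ) : P X → P (X⟦n⟧)
  ext₂' (T : Triangle C) (_ : T ∈ distTriang C) : P T.obj₁ → P T.obj₃ →
    ObjectProperty.isoClosure P T.obj₂

end CategoryTheory.Triangulated

variable (C : Type u) [Category.{v} C] [Preadditive C] [HasZeroObject C]
  [HasShift C ℤ] [∀ n : ℤ, (shiftFunctor C n).Additive] [Pretriangulated C]
  [CategoryTheory.Linear (ZMod 2) C] [HasFiniteBiproducts C]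

variable {C}

/-- `X` is an exceptional object: `Hom(X, X[r]) = 0` for `r ≠ 0`, and `Hom(X, X)` is
one-dimensional over `𝔽₂`, spanned by the identity. -/
def IsExceptional (X : C) : Prop :=
  (∀ r : ℤ, r ≠ 0 → ∀ f : X ⟶ X⟦r⟧, f = 0) ∧
  (𝟙 X ≠ 0) ∧
  Submodule.span (ZMod 2) {𝟙 X} = (⊤ : Submodule (ZMod 2) (X ⟶ X))

/-- `(X i)` is an exceptional collection: each object is exceptional and
`Hom(Xⁱ, Xᵏ[r]) = 0` for `i > k`. -/
def IsExceptionalCollection {m : ℕ} (X : Fin m → C) : Prop :=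
  (∀ i, IsExceptional (X i)) ∧
  ∀ i k : Fin m, k < i → ∀ (r : ℤ) (f : X i ⟶ (X k)⟦r⟧), f = 0

/-- The collection `(X i)` is full: any strictly full triangulated subcategory
(closed under isomorphisms) containing all the `X i` is all of `C`. -/
def IsFullCollection {m : ℕ} (X : Fin m → C) : Prop :=
  ∀ S : Triangulated.Subcategory C, ObjectProperty.IsClosedUnderIsomorphisms S.P →
    (∀ i, S.P (X i)) → ∀ Z : C, S.P Z

/-- `T` is (a choice of) the mutated object `T_X(Y)`: there is a finite family
`f j : X ⟶ Y⟦r j⟧` forming a homogeneous basis of `⊕_r Hom(X, Y[r])`, and a distinguished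
triangle `⊕_j X[-r j] → Y → T → (⊕_j X[-r j])[1]` whose first map is the evaluation map. -/
def IsTwist (X Y T : C) : Prop :=
  ∃ (κ : ℕ) (r : Fin κ → ℤ) (f : ∀ j, X ⟶ Y⟦r j⟧),
    (∀ s : ℤ,
      LinearIndependent (ZMod 2)
        (fun j : {j : Fin κ // r j = s} =>
          f j.1 ≫ eqToHom (congrArg (fun t => Y⟦t⟧) j.2)) ∧
      Submodule.span (ZMod 2)
        (Set.range (fun j : {j : Fin κ // r j = s} =>
          f j.1 ≫ eqToHom (congrArg (fun t => Y⟦t⟧) j.2))) = ⊤) ∧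
    ∃ (g : Y ⟶ T) (h : T ⟶ (⨁ fun j => X⟦-r j⟧)⟦(1:ℤ)⟧),
      Triangle.mk
        (biproduct.desc fun j =>
          (f j)⟦-r j⟧' ≫ (shiftFunctorCompIsoId C (r j) (-r j) (add_neg_cancel _)).hom.app Y)
        g h ∈ distTriang C

lemma homZero_of_shift_target {W Z : C} (h : ∀ (t : ℤ) (φ : W ⟶ Z⟦t⟧), φ = 0)
    (a : ℤ) : ∀ (t : ℤ) (φ : W ⟶ (Z⟦a⟧)⟦t⟧), φ = 0 := by
  intro t φ
  have h2 : φ ≫ (shiftFunctorAdd' C a t (a + t) rfl).inv.app Z = 0 := h (a + t) _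
  have h3 := congrArg (· ≫ (shiftFunctorAdd' C a t (a + t) rfl).hom.app Z) h2
  simpa using h3

lemma homZero_unshift {W Z : C} (h : ∀ (t : ℤ) (φ : W ⟶ Z⟦t⟧), φ = 0)
    (φ : W ⟶ Z) : φ = 0 := by
  have h2 : φ ≫ (shiftFunctorZero C ℤ).inv.app Z = 0 := h 0 _
  have h3 := congrArg (· ≫ (shiftFunctorZero C ℤ).hom.app Z) h2
  simpa using h3

lemma homZero_of_shift_source {W Z : C} (h : ∀ (t : ℤ) (φ : W ⟶ Z⟦t⟧), φ = 0)
    (a : ℤ) : ∀ (t : ℤ) (φ : W⟦a⟧ ⟶ Z⟦t⟧), φ = 0 := by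
  intro t φ
  apply (shiftFunctor C (-a)).map_injective
  rw [Functor.map_zero]
  have h2 : ((shiftFunctorCompIsoId C a (-a) (add_neg_cancel a)).inv.app W ≫ φ⟦-a⟧' ≫
      (shiftFunctorAdd' C t (-a) (t + -a) rfl).inv.app Z) = 0 := h (t + -a) _
  have h3 := congrArg (fun m => (shiftFunctorCompIsoId C a (-a) (add_neg_cancel a)).hom.app W ≫
      m ≫ (shiftFunctorAdd' C t (-a) (t + -a) rfl).hom.app Z) h2
  simpa using h3

lemma homZero_biproduct_target {W : C} {J : Type} [Fintype J] [DecidableEq J] {B : J → C}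
    (t : ℤ) (φ : W ⟶ (⨁ B)⟦t⟧) (h : ∀ j, φ ≫ (biproduct.π B j)⟦t⟧' = 0) : φ = 0 := by
  have h1 : φ ≫ (𝟙 (⨁ B))⟦t⟧' = φ := by simp
  rw [← h1, ← biproduct.total, Functor.map_sum, Preadditive.comp_sum]
  refine Finset.sum_eq_zero fun j _ => ?_
  rw [Functor.map_comp, ← Category.assoc, h j, zero_comp]

lemma homZero_biproduct_source {W : C} {J : Type} [Fintype J] [DecidableEq J] {B : J → C}
    (t : ℤ) (φ : (⨁ B)⟦t⟧ ⟶ W) (h : ∀ j, (biproduct.ι B j)⟦t⟧' ≫ φ = 0) : φ = 0 := by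
  have h1 : (𝟙 (⨁ B))⟦t⟧' ≫ φ = φ := by simp
  rw [← h1, ← biproduct.total, Functor.map_sum, Preadditive.sum_comp]
  refine Finset.sum_eq_zero fun j _ => ?_
  rw [Functor.map_comp, Category.assoc, h j, comp_zero]

lemma key' {X Y : C} (n s : ℤ) (hns : n = s) (h : -n + s = 0) (φ : X ⟶ Y⟦n⟧) :
    (shiftFunctorCompIsoId C (-n) s h).inv.app X ≫
      (φ⟦-n⟧' ≫ (shiftFunctorCompIsoId C n (-n) (add_neg_cancel n)).hom.app Y)⟦s⟧' =
      φ ≫ eqToHom (congrArg (fun t => Y⟦t⟧) hns) := by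
  subst hns
  rw [eqToHom_refl, Category.comp_id, Functor.map_comp]
  have h1 : (shiftFunctorCompIsoId C (-n) n h).inv.app X ≫ (φ⟦-n⟧')⟦n⟧' =
      φ ≫ (shiftFunctorCompIsoId C (-n) n h).inv.app (Y⟦n⟧) := by
    simpa using ((shiftFunctorCompIsoId C (-n) n h).inv.naturality φ).symm
  rw [← Category.assoc, h1, Category.assoc,
    shift_shiftFunctorCompIsoId_add_neg_cancel_hom_app]
  simp

lemma scalar_of_span {X : C}
    (hX : Submodule.span (ZMod 2) {𝟙 X} = (⊤ : Submodule (ZMod 2) (X ⟶ X)))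
    {a b : ℤ} (h : a + b = 0) (v : X ⟶ (X⟦a⟧)⟦b⟧) :
    ∃ d : ZMod 2, v = d • (shiftFunctorCompIsoId C a b h).inv.app X := by
  have hm : (v ≫ (shiftFunctorCompIsoId C a b h).hom.app X) ∈
      Submodule.span (ZMod 2) {𝟙 X} := hX ▸ Submodule.mem_top
  obtain ⟨d, hd⟩ := Submodule.mem_span_singleton.1 hm
  refine ⟨d, ?_⟩
  have h2 : (v ≫ (shiftFunctorCompIsoId C a b h).hom.app X) ≫
      (shiftFunctorCompIsoId C a b h).inv.app X = v := by simp
  rw [← h2, ← hd, Linear.smul_comp, Category.id_comp]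

lemma main_aux {X Y T : C} (hX : IsExceptional X) (hYexc : IsExceptional Y)
    (hY : ∀ (t : ℤ) (φ : Y ⟶ X⟦t⟧), φ = 0)
    {κ : ℕ} (r : Fin κ → ℤ) (f : ∀ j, X ⟶ Y⟦r j⟧)
    (hbasis : ∀ s : ℤ,
      LinearIndependent (ZMod 2)
        (fun j : {j : Fin κ // r j = s} =>
          f j.1 ≫ eqToHom (congrArg (fun t => Y⟦t⟧) j.2)) ∧
      Submodule.span (ZMod 2)
        (Set.range (fun j : {j : Fin κ // r j = s} =>
          f j.1 ≫ eqToHom (congrArg (fun t => Y⟦t⟧) j.2))) = ⊤)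
    (ev : (⨁ fun j => X⟦-r j⟧) ⟶ Y)
    (hev : ∀ j, biproduct.ι (fun j => X⟦-r j⟧) j ≫ ev =
      (f j)⟦-r j⟧' ≫ (shiftFunctorCompIsoId C (r j) (-r j) (add_neg_cancel _)).hom.app Y)
    (g : Y ⟶ T) (hh : T ⟶ (⨁ fun j => X⟦-r j⟧)⟦(1:ℤ)⟧)
    (hTri : Triangle.mk ev g hh ∈ distTriang C) :
    IsExceptional T := by
  -- decomposition of maps into the shifted biproduct
  have hdesc : ∀ (s : ℤ) (ψ : X ⟶ (⨁ fun j => X⟦-r j⟧)⟦s⟧),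
      ψ ≫ ev⟦s⟧' = ∑ j, (ψ ≫ (biproduct.π (fun j => X⟦-r j⟧) j)⟦s⟧') ≫
        (biproduct.ι (fun j => X⟦-r j⟧) j ≫ ev)⟦s⟧' := by
    intro s ψ
    have h1 : ψ ≫ ev⟦s⟧' = ψ ≫ (𝟙 (⨁ fun j => X⟦-r j⟧))⟦s⟧' ≫ ev⟦s⟧' := by simp
    rw [h1, ← biproduct.total, Functor.map_sum, Preadditive.sum_comp, Preadditive.comp_sum]
    exact Finset.sum_congr rfl fun j _ => by simp [Functor.map_comp]
  -- component analysis
  have hcomp : ∀ (s : ℤ) (ψ : X ⟶ (⨁ fun j => X⟦-r j⟧)⟦s⟧), ∃ d : Fin κ → ZMod 2,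
      (∀ j, ψ ≫ (biproduct.π (fun j => X⟦-r j⟧) j)⟦s⟧' =
        if hj : r j = s then
          d j • (shiftFunctorCompIsoId C (-r j) s
            (by rw [hj]; exact neg_add_cancel s)).inv.app X
        else 0) ∧
      (∀ j, (ψ ≫ (biproduct.π (fun j => X⟦-r j⟧) j)⟦s⟧') ≫
          (biproduct.ι (fun j => X⟦-r j⟧) j ≫ ev)⟦s⟧' =
        if hj : r j = s then
          d j • (f j ≫ eqToHom (congrArg (fun t => Y⟦t⟧) hj))
        else 0) := by
    intro s ψ
    have H : ∀ j, ∃ d : ZMod 2, ψ ≫ (biproduct.π (fun j => X⟦-r j⟧) j)⟦s⟧' =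
        if hj : r j = s then
          d • (shiftFunctorCompIsoId C (-r j) s
            (by rw [hj]; exact neg_add_cancel s)).inv.app X
        else 0 := by
      intro j
      by_cases hj : r j = s
      · obtain ⟨d, hd⟩ := scalar_of_span hX.2.2
          (show -r j + s = 0 by rw [hj]; exact neg_add_cancel s)
          (ψ ≫ (biproduct.π (fun j => X⟦-r j⟧) j)⟦s⟧')
        exact ⟨d, by rw [dif_pos hj]; exact hd⟩
      · refine ⟨0, ?_⟩
        rw [dif_neg hj]
        have hne : -r j + s ≠ 0 := fun hc => hj (by omega)
        have h0 : (ψ ≫ (biproduct.π (fun j => X⟦-r j⟧) j)⟦s⟧') ≫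
            (shiftFunctorAdd' C (-r j) s (-r j + s) rfl).inv.app X = 0 :=
          hX.1 _ hne _
        have h3 := congrArg (· ≫ (shiftFunctorAdd' C (-r j) s (-r j + s) rfl).hom.app X) h0
        simpa using h3
    choose d hd using H
    refine ⟨d, hd, fun j => ?_⟩
    rw [hd j]
    by_cases hj : r j = s
    · rw [dif_pos hj, dif_pos hj, Linear.smul_comp, hev j]
      congr 1
      exact key' (r j) s hj _ (f j)
    · rw [dif_neg hj, dif_neg hj, zero_comp]
  -- injectivity of composition with ev
  have hInj : ∀ (s : ℤ) (ψ : X ⟶ (⨁ fun j => X⟦-r j⟧)⟦s⟧), ψ ≫ ev⟦s⟧' = 0 → ψ = 0 := by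
    intro s ψ hψ
    obtain ⟨d, hd1, hd2⟩ := hcomp s ψ
    have h1 : ∑ j, (if hj : r j = s then
        d j • (f j ≫ eqToHom (congrArg (fun t => Y⟦t⟧) hj)) else 0) = 0 := by
      calc ∑ j, (if hj : r j = s then
              d j • (f j ≫ eqToHom (congrArg (fun t => Y⟦t⟧) hj)) else 0)
          = ∑ j, (ψ ≫ (biproduct.π (fun j => X⟦-r j⟧) j)⟦s⟧') ≫
              (biproduct.ι (fun j => X⟦-r j⟧) j ≫ ev)⟦s⟧' :=
            Finset.sum_congr rfl (fun j _ => (hd2 j).symm)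
        _ = ψ ≫ ev⟦s⟧' := (hdesc s ψ).symm
        _ = 0 := hψ
    have h2 : ∑ j' : {j : Fin κ // r j = s},
        (if hj : r j'.1 = s then
          d j'.1 • (f j'.1 ≫ eqToHom (congrArg (fun t => Y⟦t⟧) hj)) else 0) =
        ∑ j, (if hj : r j = s then
          d j • (f j ≫ eqToHom (congrArg (fun t => Y⟦t⟧) hj)) else 0) := by
      rw [← Finset.sum_subtype (Finset.univ.filter (fun j => r j = s)) (by simp)
        (fun j => if hj : r j = s then
          d j • (f j ≫ eqToHom (congrArg (fun t => Y⟦t⟧) hj)) else 0)]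
      exact Finset.sum_filter_of_ne (fun x _ hx => by
        by_contra hp
        exact hx (dif_neg hp))
    have h3 : ∑ j' : {j : Fin κ // r j = s},
        d j'.1 • (f j'.1 ≫ eqToHom (congrArg (fun t => Y⟦t⟧) j'.2)) = 0 := by
      rw [← h1, ← h2]
      exact Finset.sum_congr rfl (fun j' _ => by rw [dif_pos j'.2])
    have hzero := Fintype.linearIndependent_iff.1 (hbasis s).1 (fun j' => d j'.1) h3
    refine homZero_biproduct_target s ψ (fun j => ?_)
    rw [hd1 j]
    by_cases hj : r j = s
    · have hdj : d j = 0 := hzero ⟨j, hj⟩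
      rw [dif_pos hj, hdj, zero_smul]
    · exact dif_neg hj
  -- surjectivity of composition with ev
  have hSurj : ∀ (s : ℤ) (φ : X ⟶ Y⟦s⟧), ∃ ψ : X ⟶ (⨁ fun j => X⟦-r j⟧)⟦s⟧,
      ψ ≫ ev⟦s⟧' = φ := by
    intro s φ
    have hmem : φ ∈ Submodule.span (ZMod 2) (Set.range
        (fun j : {j : Fin κ // r j = s} =>
          f j.1 ≫ eqToHom (congrArg (fun t => Y⟦t⟧) j.2))) :=
      (hbasis s).2 ▸ Submodule.mem_top
    obtain ⟨c, hc⟩ := (Submodule.mem_span_range_iff_exists_fun (ZMod 2)).1 hmem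
    refine ⟨∑ j' : {j : Fin κ // r j = s}, c j' •
      ((shiftFunctorCompIsoId C (-r j'.1) s
        (by rw [j'.2]; exact neg_add_cancel s)).inv.app X ≫
        (biproduct.ι (fun j => X⟦-r j⟧) j'.1)⟦s⟧'), ?_⟩
    rw [Preadditive.sum_comp, ← hc]
    refine Finset.sum_congr rfl fun j' _ => ?_
    rw [Linear.smul_comp]
    congr 1
    rw [Category.assoc, ← Functor.map_comp, hev j'.1]
    exact key' (r j'.1) s j'.2 _ (f j'.1)
  -- Hom(X, T[s]) = 0
  have hXT : ∀ (s : ℤ) (φ : X ⟶ T⟦s⟧), φ = 0 := by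
    intro s φ
    have hTS' : Triangle.mk (s.negOnePow • ev⟦s⟧') (s.negOnePow • g⟦s⟧')
        (s.negOnePow • (hh⟦s⟧' ≫
          (shiftFunctorComm C (1:ℤ) s).hom.app (⨁ fun j => X⟦-r j⟧))) ∈ distTriang C :=
      Triangle.shift_distinguished (Triangle.mk ev g hh) hTri s
    have key0 : (s.negOnePow • (hh⟦s⟧' ≫
        (shiftFunctorComm C (1:ℤ) s).hom.app (⨁ fun j => X⟦-r j⟧))) ≫
        (s.negOnePow • ev⟦s⟧')⟦(1:ℤ)⟧' = 0 := comp_distTriang_mor_zero₃₁ _ hTS'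
    have key1 : (hh⟦s⟧' ≫ (shiftFunctorComm C (1:ℤ) s).hom.app (⨁ fun j => X⟦-r j⟧)) ≫
        (ev⟦s⟧')⟦(1:ℤ)⟧' = 0 := by
      have e1 : (s.negOnePow • ev⟦s⟧')⟦(1:ℤ)⟧' = s.negOnePow • (ev⟦s⟧')⟦(1:ℤ)⟧' :=
        Functor.map_units_smul _ _ _
      rw [e1, Linear.units_smul_comp, Linear.comp_units_smul] at key0
      exact (smul_eq_zero_iff_eq _).1 ((smul_eq_zero_iff_eq _).1 key0)
    have hnat : (ev⟦s⟧')⟦(1:ℤ)⟧' ≫ (shiftFunctorAdd' C s (1:ℤ) (s+1) rfl).inv.app Y =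
        (shiftFunctorAdd' C s (1:ℤ) (s+1) rfl).inv.app (⨁ fun j => X⟦-r j⟧) ≫
          ev⟦(s+1:ℤ)⟧' := by
      simpa using ((shiftFunctorAdd' C s (1:ℤ) (s+1) rfl).inv.naturality ev)
    have ha : φ ≫ (s.negOnePow • (hh⟦s⟧' ≫
        (shiftFunctorComm C (1:ℤ) s).hom.app (⨁ fun j => X⟦-r j⟧))) = 0 := by
      rw [Linear.comp_units_smul]
      refine (smul_eq_zero_iff_eq _).2 ?_
      have hq : ((φ ≫ (hh⟦s⟧' ≫
          (shiftFunctorComm C (1:ℤ) s).hom.app (⨁ fun j => X⟦-r j⟧))) ≫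
          (shiftFunctorAdd' C s (1:ℤ) (s+1) rfl).inv.app (⨁ fun j => X⟦-r j⟧)) ≫
          ev⟦(s+1:ℤ)⟧' = 0 := by
        calc ((φ ≫ (hh⟦s⟧' ≫
              (shiftFunctorComm C (1:ℤ) s).hom.app (⨁ fun j => X⟦-r j⟧))) ≫
              (shiftFunctorAdd' C s (1:ℤ) (s+1) rfl).inv.app (⨁ fun j => X⟦-r j⟧)) ≫
              ev⟦(s+1:ℤ)⟧'
            = φ ≫ (hh⟦s⟧' ≫
              (shiftFunctorComm C (1:ℤ) s).hom.app (⨁ fun j => X⟦-r j⟧)) ≫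
              ((shiftFunctorAdd' C s (1:ℤ) (s+1) rfl).inv.app (⨁ fun j => X⟦-r j⟧) ≫
                ev⟦(s+1:ℤ)⟧') := by
              simp only [Category.assoc]
          _ = φ ≫ (hh⟦s⟧' ≫
              (shiftFunctorComm C (1:ℤ) s).hom.app (⨁ fun j => X⟦-r j⟧)) ≫
              ((ev⟦s⟧')⟦(1:ℤ)⟧' ≫ (shiftFunctorAdd' C s (1:ℤ) (s+1) rfl).inv.app Y) := by
              rw [← hnat]
          _ = φ ≫ ((hh⟦s⟧' ≫
              (shiftFunctorComm C (1:ℤ) s).hom.app (⨁ fun j => X⟦-r j⟧)) ≫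
              (ev⟦s⟧')⟦(1:ℤ)⟧') ≫ (shiftFunctorAdd' C s (1:ℤ) (s+1) rfl).inv.app Y := by
              simp only [Category.assoc]
          _ = 0 := by rw [key1, zero_comp, comp_zero]
      have hq0 := hInj (s+1) _ hq
      have h4 := congrArg
        (· ≫ (shiftFunctorAdd' C s (1:ℤ) (s+1) rfl).hom.app (⨁ fun j => X⟦-r j⟧)) hq0
      simpa using h4
    obtain ⟨ψ, hψ⟩ := Triangle.coyoneda_exact₃ _ hTS' φ ha
    obtain ⟨ψ, hψ⟩ : ∃ ψ : X ⟶ Y⟦s⟧, φ = ψ ≫ (s.negOnePow • g⟦s⟧') := ⟨ψ, hψ⟩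
    obtain ⟨χ, hχ⟩ := hSurj s ψ
    have h12 : ev ≫ g = 0 := comp_distTriang_mor_zero₁₂ _ hTri
    rw [hψ, ← hχ, Linear.comp_units_smul, Category.assoc, ← Functor.map_comp,
      h12, Functor.map_zero, comp_zero, smul_zero]
  -- Hom(A[1], T[s]) = 0
  have hAT : ∀ (s : ℤ) (χ : (⨁ fun j => X⟦-r j⟧)⟦(1:ℤ)⟧ ⟶ T⟦s⟧), χ = 0 := by
    intro s χ
    refine homZero_biproduct_source 1 χ fun j => ?_
    exact homZero_of_shift_source (homZero_of_shift_source hXT (-r j)) 1 s _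
  -- Hom(Y, A[t]) = 0
  have hYA : ∀ (t : ℤ) (ψ : Y ⟶ (⨁ fun j => X⟦-r j⟧)⟦t⟧), ψ = 0 := by
    intro t ψ
    refine homZero_biproduct_target t ψ fun j => ?_
    exact homZero_of_shift_target hY (-r j) t _
  -- Hom(Y, T[s]) = 0 for s ≠ 0
  have hYT : ∀ (s : ℤ), s ≠ 0 → ∀ (ψ : Y ⟶ T⟦s⟧), ψ = 0 := by
    intro s hs ψ
    have hTS' : Triangle.mk (s.negOnePow • ev⟦s⟧') (s.negOnePow • g⟦s⟧')
        (s.negOnePow • (hh⟦s⟧' ≫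
          (shiftFunctorComm C (1:ℤ) s).hom.app (⨁ fun j => X⟦-r j⟧))) ∈ distTriang C :=
      Triangle.shift_distinguished (Triangle.mk ev g hh) hTri s
    have h3 : ψ ≫ (s.negOnePow • (hh⟦s⟧' ≫
        (shiftFunctorComm C (1:ℤ) s).hom.app (⨁ fun j => X⟦-r j⟧))) = 0 :=
      homZero_of_shift_target hYA s 1 _
    obtain ⟨ψ', hψ'⟩ := Triangle.coyoneda_exact₃ _ hTS' ψ h3
    rw [hψ', hYexc.1 s hs ψ']; exact zero_comp
  -- factorization through hh
  have hfact : ∀ {Z : C} (φ : T ⟶ Z), g ≫ φ = 0 →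
      ∃ ρ : (⨁ fun j => X⟦-r j⟧)⟦(1:ℤ)⟧ ⟶ Z, φ = hh ≫ ρ :=
    fun φ hφ => Triangle.yoneda_exact₃ _ hTri φ hφ
  -- Hom(Y, T) is spanned by g
  have hspan : ∀ (ψ : Y ⟶ T), ∃ c : ZMod 2, ψ = c • g := by
    intro ψ
    have h3 : ψ ≫ hh = 0 := hYA 1 _
    obtain ⟨ψ', hψ'⟩ : ∃ ψ' : Y ⟶ Y, ψ = ψ' ≫ g :=
      Triangle.coyoneda_exact₃ _ hTri ψ h3
    have hm : ψ' ∈ Submodule.span (ZMod 2) {𝟙 Y} := hYexc.2.2 ▸ Submodule.mem_top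
    obtain ⟨c, hc⟩ := Submodule.mem_span_singleton.1 hm
    exact ⟨c, by rw [hψ', ← hc, Linear.smul_comp, Category.id_comp]⟩
  refine ⟨?_, ?_, ?_⟩
  · intro s hs φ
    have h0 : g ≫ φ = 0 := hYT s hs _
    obtain ⟨ρ, hρ⟩ := hfact φ h0
    rw [hρ, hAT s ρ, comp_zero]
  · intro h0
    have hg : g = 0 := by rw [← Category.comp_id g, h0, comp_zero]
    have h12 : 𝟙 Y ≫ g = 0 := by rw [hg, comp_zero]
    obtain ⟨χ, hχ⟩ := Triangle.coyoneda_exact₂ _ hTri (𝟙 Y) h12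
    have hχ0 : χ = 0 := homZero_unshift hYA χ
    exact hYexc.2.1 (by rw [hχ, hχ0]; exact zero_comp)
  · refine Submodule.eq_top_iff'.2 fun φ => ?_
    obtain ⟨c, hc⟩ := hspan (g ≫ φ)
    have h0 : g ≫ (φ - c • 𝟙 T) = 0 := by
      rw [Preadditive.comp_sub, Linear.comp_smul, Category.comp_id, hc, sub_self]
    obtain ⟨ρ, hρ⟩ := hfact _ h0
    have hρ0 : ρ = 0 := homZero_unshift hAT ρ
    have hsub : φ - c • 𝟙 T = 0 := by rw [hρ, hρ0, comp_zero]
    have hφ : φ = c • 𝟙 T := by rwa [sub_eq_zero] at hsub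
    rw [hφ]
    exact Submodule.smul_mem _ c (Submodule.mem_span_singleton_self _)


/-- if `(X, Y)` is an exceptional pair, i.e. `X` and `Y` are exceptional and
`Hom(Y, X[r]) = 0` for all `r`, then `T_X(Y)` is exceptional. -/
theorem isExceptional_twist
    (hfin : ∀ X Y : C, (∀ r : ℤ, Module.Finite (ZMod 2) (X ⟶ Y⟦r⟧)) ∧
      {r : ℤ | ∃ f : X ⟶ Y⟦r⟧, f ≠ 0}.Finite)
    (X Y T : C) (hX : IsExceptional X) (hYexc : IsExceptional Y)
    (hY : ∀ (r : ℤ) (f : Y ⟶ X⟦r⟧), f = 0)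
    (hT : IsTwist X Y T) :
    IsExceptional T := by
  obtain ⟨κ, r, f, hbasis, g, hh, hTri⟩ := hT
  exact main_aux hX hYexc hY r f hbasis _ (fun j => biproduct.ι_desc _ _) g hh hTri
end

section
/- Let X be an exceptional object of 𝒞, and let Y, Y' be objects with Hom(Y, X[s]) = 0 for all s ∈ ℤ. Then for every r ∈ ℤ one has dim_{𝔽₂} Hom(T_X(Y), T_X(Y')[r]) = dim_{𝔽₂} Hom(Y, Y'[r]). (This is the identification hom(Yⁱ, Yᵏ) = hom(X^{i+1}, X^{k+1}) appearing in the c-move on directed categories.) -/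
open CategoryTheory Category Limits Pretriangulated

universe v u

variable (C : Type u) [Category.{v} C] [Preadditive C] [HasZeroObject C]
  [HasShift C ℤ] [∀ n : ℤ, (shiftFunctor C n).Additive] [Pretriangulated C]
  [CategoryTheory.Linear (ZMod 2) C] [HasFiniteBiproducts C]

variable {C}

/-- Local copy of the former Mathlib structure `Triangulated.Subcategory` (removed upstream). -/
structure Triangulated.Subcategory (C : Type u) [Category.{v} C] [Preadditive C] [HasZeroObject C]
    [HasShift C ℤ] [∀ n : ℤ, (shiftFunctor C n).Additive] [Pretriangulated C] where
  P : C → Prop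
  zero' : ∃ (Z : C) (_ : IsZero Z), P Z
  shift (X : C) (n : ℤ) : P X → P (X⟦n⟧)
  ext₂' (T : Triangle C) (_ : T ∈ distTriang C) : P T.obj₁ → P T.obj₃ →
    ObjectProperty.isoClosure P T.obj₂

set_option linter.unusedSectionVars false
set_option linter.unusedVariables false

namespace TwistAux

lemma hom_char_two {P Q : C} (f : P ⟶ Q) : f + f = 0 := by
  have h1 : f + f = (1 + 1 : ZMod 2) • f := by rw [add_smul, one_smul]
  rw [h1, show (1 + 1 : ZMod 2) = 0 by decide, zero_smul]

lemma unit_smul_eq {P Q : C} (u : ℤˣ) (f : P ⟶ Q) : u • f = f := by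
  rcases Int.units_eq_one_or u with h | h <;> subst h
  · rw [one_smul]
  · rw [Units.smul_def, Units.val_neg, Units.val_one, neg_smul, one_smul]
    exact neg_eq_of_add_eq_zero_left (hom_char_two f)

lemma comp_unit_smul {P Q R : C} (u : ℤˣ) (f : P ⟶ Q) (m : Q ⟶ R) :
    f ≫ (u • m) = f ≫ m := by
  rw [Units.smul_def, Preadditive.comp_zsmul, ← Units.smul_def, unit_smul_eq]

lemma comp_unit_smul_shift {P Q R : C} (u : ℤˣ) (f : P ⟶ Q⟦(1:ℤ)⟧) (m : Q ⟶ R) :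
    f ≫ (u • m)⟦(1:ℤ)⟧' = f ≫ m⟦(1:ℤ)⟧' := by
  rw [Units.smul_def, Functor.map_zsmul, Preadditive.comp_zsmul, ← Units.smul_def, unit_smul_eq]

lemma vanish_double {P Q : C} (h : ∀ (m : ℤ) (f : P ⟶ Q⟦m⟧), f = 0)
    (a b : ℤ) (f : P ⟶ (Q⟦a⟧)⟦b⟧) : f = 0 := by
  have h1 : f ≫ (shiftFunctorAdd C a b).inv.app Q = 0 := h (a + b) _
  calc f = f ≫ ((shiftFunctorAdd C a b).inv.app Q ≫ (shiftFunctorAdd C a b).hom.app Q) := by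
        rw [Iso.inv_hom_id_app]; simp
    _ = 0 := by rw [← assoc, h1, zero_comp]

lemma vanish_shift_src {P Q : C} (h : ∀ (m : ℤ) (f : P ⟶ Q⟦m⟧), f = 0)
    (a m : ℤ) (f : P⟦a⟧ ⟶ Q⟦m⟧) : f = 0 := by
  have h1 : (shiftFunctorCompIsoId C a (-a) (add_neg_cancel a)).inv.app P ≫ f⟦(-a)⟧' = 0 :=
    vanish_double h m (-a) _
  have h2 : f⟦(-a)⟧' = 0 := by
    calc f⟦(-a)⟧' = ((shiftFunctorCompIsoId C a (-a) (add_neg_cancel a)).hom.app P ≫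
          (shiftFunctorCompIsoId C a (-a) (add_neg_cancel a)).inv.app P) ≫ f⟦(-a)⟧' := by
          rw [Iso.hom_inv_id_app, id_comp]
      _ = 0 := by rw [assoc, h1, comp_zero]
  exact (shiftFunctor C (-a)).map_injective (by rw [h2, Functor.map_zero])

lemma shift_total {J : Type} [Fintype J] (Z : J → C) (n : ℤ) {W : C} (φ : W ⟶ (⨁ Z)⟦n⟧) :
    φ = ∑ j, (φ ≫ (biproduct.π Z j)⟦n⟧') ≫ (biproduct.ι Z j)⟦n⟧' := by
  conv_lhs => rw [← comp_id φ]
  rw [← CategoryTheory.Functor.map_id (shiftFunctor C n), ← biproduct.total,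
    Functor.map_sum, Preadditive.comp_sum]
  exact Finset.sum_congr rfl fun j _ => by rw [Functor.map_comp, ← assoc]

lemma hom_shift_biproduct_zero {J : Type} [Fintype J] (Z : J → C) (n : ℤ) {W : C}
    (h : ∀ (j : J) (f : W ⟶ (Z j)⟦n⟧), f = 0) (φ : W ⟶ (⨁ Z)⟦n⟧) : φ = 0 := by
  rw [shift_total Z n φ]
  exact Finset.sum_eq_zero fun j _ => by
    rw [h j (φ ≫ (biproduct.π Z j)⟦n⟧'), zero_comp]

lemma bij_precomp (T : Triangle C) (hT : T ∈ distTriang C) (Z : C)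
    (h1 : ∀ φ : T.obj₁ ⟶ Z, φ = 0) (h2 : ∀ φ : T.obj₁⟦(1 : ℤ)⟧ ⟶ Z, φ = 0) :
    Function.Bijective (fun f : T.obj₃ ⟶ Z => T.mor₂ ≫ f) := by
  constructor
  · intro f₁ f₂ h12
    have hsub : T.mor₂ ≫ (f₁ - f₂) = 0 := by
      rw [Preadditive.comp_sub, show T.mor₂ ≫ f₁ = T.mor₂ ≫ f₂ from h12, sub_self]
    obtain ⟨g, hg⟩ := Triangle.yoneda_exact₃ T hT (f₁ - f₂) hsub
    have : f₁ - f₂ = 0 := by rw [hg, h2 g, comp_zero]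
    exact sub_eq_zero.mp this
  · intro f
    obtain ⟨g, hg⟩ := Triangle.yoneda_exact₂ T hT f (h1 _)
    exact ⟨g, hg.symm⟩

lemma bij_postcomp (T : Triangle C) (hT : T ∈ distTriang C) (W : C)
    (h1 : ∀ φ : W ⟶ T.obj₁, φ = 0) (h2 : ∀ φ : W ⟶ T.obj₁⟦(1 : ℤ)⟧, φ = 0) :
    Function.Bijective (fun f : W ⟶ T.obj₂ => f ≫ T.mor₂) := by
  constructor
  · intro f₁ f₂ h12
    have hsub : (f₁ - f₂) ≫ T.mor₂ = 0 := by
      rw [Preadditive.sub_comp, show f₁ ≫ T.mor₂ = f₂ ≫ T.mor₂ from h12, sub_self]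
    obtain ⟨g, hg⟩ := Triangle.coyoneda_exact₂ T hT (f₁ - f₂) hsub
    have : f₁ - f₂ = 0 := by rw [hg, h1 g, zero_comp]
    exact sub_eq_zero.mp this
  · intro f
    obtain ⟨g, hg⟩ := Triangle.coyoneda_exact₃ T hT f (h2 _)
    exact ⟨g, hg.symm⟩

lemma zero_obj₃ (T : Triangle C) (hT : T ∈ distTriang C) (W : C)
    (hsurj : ∀ g : W ⟶ T.obj₂, ∃ e : W ⟶ T.obj₁, e ≫ T.mor₁ = g)
    (hinj : ∀ ψ : W ⟶ T.obj₁⟦(1 : ℤ)⟧, ψ ≫ (T.mor₁)⟦(1 : ℤ)⟧' = 0 → ψ = 0)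
    (f : W ⟶ T.obj₃) : f = 0 := by
  have h1 : f ≫ T.mor₃ = 0 :=
    hinj _ (by rw [assoc, comp_distTriang_mor_zero₃₁ T hT, comp_zero])
  obtain ⟨g, hg⟩ := Triangle.coyoneda_exact₃ T hT f h1
  obtain ⟨e, he⟩ := hsurj g
  rw [hg, ← he, assoc, comp_distTriang_mor_zero₁₂ T hT, comp_zero]

lemma sum_dite_subtype {α : Type} [Fintype α] (p : α → Prop) [DecidablePred p]
    {M : Type*} [AddCommMonoid M] (F : ∀ a, p a → M) :
    (∑ a : α, if h : p a then F a h else 0) = ∑ i : {a // p a}, F i.1 i.2 := by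
  rw [← Finset.sum_filter_of_ne
    (fun x _ hx => by by_contra hp; exact hx (dif_neg hp))]
  rw [← Finset.sum_subtype_eq_sum_filter, Finset.subtype_univ]
  exact Finset.sum_congr rfl fun i _ => dif_pos i.2

-- ev machinery

/-- The evaluation map. -/
noncomputable def evm (X Yp : C) {κ : ℕ} (rr : Fin κ → ℤ) (ff : ∀ j, X ⟶ Yp⟦rr j⟧) :
    (⨁ fun j => X⟦-rr j⟧) ⟶ Yp :=
  biproduct.desc fun j => (ff j)⟦-rr j⟧' ≫
    (shiftFunctorCompIsoId C (rr j) (-rr j) (add_neg_cancel _)).hom.app Yp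

/-- The canonical "unit" map `X ⟶ X⟦-rr j⟧⟦s⟧` when `rr j = s`. -/
noncomputable def uu (X : C) {κ : ℕ} (rr : Fin κ → ℤ) (j : Fin κ) {s : ℤ} (h : rr j = s) :
    X ⟶ (X⟦-rr j⟧)⟦s⟧ :=
  (shiftFunctorCompIsoId C (-rr j) (rr j) (neg_add_cancel _)).inv.app X ≫
    eqToHom (congrArg (fun t => (X⟦-rr j⟧)⟦t⟧) h)

lemma uu_comp_ev (X Yp : C) {κ : ℕ} (rr : Fin κ → ℤ) (ff : ∀ j, X ⟶ Yp⟦rr j⟧)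
    (j : Fin κ) {s : ℤ} (h : rr j = s) :
    uu X rr j h ≫ (biproduct.ι (fun j => X⟦-rr j⟧) j)⟦s⟧' ≫ (evm X Yp rr ff)⟦s⟧' =
      ff j ≫ eqToHom (congrArg (fun t => Yp⟦t⟧) h) := by
  subst h
  simp only [uu, eqToHom_refl, comp_id]
  rw [← Functor.map_comp]
  simp only [evm, biproduct.ι_desc]
  rw [Functor.map_comp, shift_shiftFunctorCompIsoId_add_neg_cancel_hom_app]
  have hnat := (shiftFunctorCompIsoId C (-rr j) (rr j) (neg_add_cancel _)).inv.naturality (ff j)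
  simp only [Functor.id_map, Functor.comp_map] at hnat
  rw [← assoc, ← hnat, assoc, Iso.inv_hom_id_app]
  simp

lemma comp_vanish (X : C) (hX1 : ∀ r : ℤ, r ≠ 0 → ∀ f : X ⟶ X⟦r⟧, f = 0)
    (a s : ℤ) (hne : ¬ (a = s)) (ψ : X ⟶ (X⟦-a⟧)⟦s⟧) : ψ = 0 := by
  have h0 : -a + s ≠ 0 := fun hc => hne (by omega)
  have h1 : ψ ≫ (shiftFunctorAdd C (-a) s).inv.app X = 0 := hX1 _ h0 _
  calc ψ = ψ ≫ ((shiftFunctorAdd C (-a) s).inv.app X ≫ (shiftFunctorAdd C (-a) s).hom.app X) := by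
        rw [Iso.inv_hom_id_app]; simp
    _ = 0 := by rw [← assoc, h1, zero_comp]

lemma comp_scalar (X : C)
    (hspan : Submodule.span (ZMod 2) {𝟙 X} = (⊤ : Submodule (ZMod 2) (X ⟶ X)))
    {κ : ℕ} (rr : Fin κ → ℤ) (j : Fin κ) {s : ℤ} (h : rr j = s)
    (ψ : X ⟶ (X⟦-rr j⟧)⟦s⟧) : ∃ c : ZMod 2, ψ = c • uu X rr j h := by
  subst h
  simp only [uu, eqToHom_refl, comp_id]
  have hmem : ψ ≫ (shiftFunctorCompIsoId C (-rr j) (rr j) (neg_add_cancel _)).hom.app X ∈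
      Submodule.span (ZMod 2) {𝟙 X} := by rw [hspan]; exact Submodule.mem_top
  obtain ⟨c, hc⟩ := Submodule.mem_span_singleton.mp hmem
  refine ⟨c, ?_⟩
  have hψ : ψ = (ψ ≫ (shiftFunctorCompIsoId C (-rr j) (rr j) (neg_add_cancel _)).hom.app X) ≫
      (shiftFunctorCompIsoId C (-rr j) (rr j) (neg_add_cancel _)).inv.app X := by
    rw [assoc, Iso.hom_inv_id_app]; simp
  rw [hψ, ← hc, Linear.smul_comp, id_comp]

lemma ev_surj (X Yp : C) {κ : ℕ} (rr : Fin κ → ℤ) (ff : ∀ j, X ⟶ Yp⟦rr j⟧) (s : ℤ)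
    (hspan : Submodule.span (ZMod 2)
      (Set.range (fun j : {j : Fin κ // rr j = s} =>
        ff j.1 ≫ eqToHom (congrArg (fun t => Yp⟦t⟧) j.2))) = ⊤)
    (g : X ⟶ Yp⟦s⟧) :
    ∃ φ : X ⟶ (⨁ fun j => X⟦-rr j⟧)⟦s⟧, φ ≫ (evm X Yp rr ff)⟦s⟧' = g := by
  have hg : g ∈ Submodule.span (ZMod 2)
      (Set.range (fun j : {j : Fin κ // rr j = s} =>
        ff j.1 ≫ eqToHom (congrArg (fun t => Yp⟦t⟧) j.2))) := by
    rw [hspan]; exact Submodule.mem_top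
  obtain ⟨c, hc⟩ := (Submodule.mem_span_range_iff_exists_fun (ZMod 2)).mp hg
  refine ⟨∑ i : {j : Fin κ // rr j = s},
    c i • (uu X rr i.1 i.2 ≫ (biproduct.ι (fun j => X⟦-rr j⟧) i.1)⟦s⟧'), ?_⟩
  rw [Preadditive.sum_comp, ← hc]
  refine Finset.sum_congr rfl fun i _ => ?_
  rw [Linear.smul_comp, assoc, uu_comp_ev]

lemma ev_inj (X Yp : C) (hX1 : ∀ r : ℤ, r ≠ 0 → ∀ f : X ⟶ X⟦r⟧, f = 0)
    (hspan1 : Submodule.span (ZMod 2) {𝟙 X} = (⊤ : Submodule (ZMod 2) (X ⟶ X)))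
    {κ : ℕ} (rr : Fin κ → ℤ) (ff : ∀ j, X ⟶ Yp⟦rr j⟧) (s : ℤ)
    (hli : LinearIndependent (ZMod 2) (fun j : {j : Fin κ // rr j = s} =>
        ff j.1 ≫ eqToHom (congrArg (fun t => Yp⟦t⟧) j.2)))
    (φ : X ⟶ (⨁ fun j => X⟦-rr j⟧)⟦s⟧) (hφ : φ ≫ (evm X Yp rr ff)⟦s⟧' = 0) : φ = 0 := by
  have hcomp : ∀ i : {j : Fin κ // rr j = s},
      ∃ c : ZMod 2, φ ≫ (biproduct.π (fun j => X⟦-rr j⟧) i.1)⟦s⟧' = c • uu X rr i.1 i.2 :=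
    fun i => comp_scalar X hspan1 rr i.1 i.2 _
  choose c hcc using hcomp
  have hterm : ∀ j : Fin κ,
      ((φ ≫ (biproduct.π (fun j => X⟦-rr j⟧) j)⟦s⟧') ≫ (biproduct.ι (fun j => X⟦-rr j⟧) j)⟦s⟧') ≫
        (evm X Yp rr ff)⟦s⟧' =
      (if h : rr j = s then
        c ⟨j, h⟩ • (ff j ≫ eqToHom (congrArg (fun t => Yp⟦t⟧) h)) else 0) := by
    intro j
    by_cases h : rr j = s
    · rw [dif_pos h, hcc ⟨j, h⟩, Linear.smul_comp, Linear.smul_comp, assoc,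
        uu_comp_ev X Yp rr ff j h]
    · rw [dif_neg h, comp_vanish X hX1 (rr j) s h
        (φ ≫ (biproduct.π (fun j => X⟦-rr j⟧) j)⟦s⟧'), zero_comp, zero_comp]
  have hsum : ∑ i : {j : Fin κ // rr j = s},
      c i • (ff i.1 ≫ eqToHom (congrArg (fun t => Yp⟦t⟧) i.2)) = 0 := by
    rw [← sum_dite_subtype (fun j : Fin κ => rr j = s)
      (fun j h => c ⟨j, h⟩ • (ff j ≫ eqToHom (congrArg (fun t => Yp⟦t⟧) h)))]
    rw [← Finset.sum_congr rfl fun j _ => hterm j]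
    rw [← Preadditive.sum_comp, ← shift_total, hφ]
  have hc0 : ∀ i, c i = 0 := Fintype.linearIndependent_iff.mp hli c hsum
  rw [shift_total (fun j => X⟦-rr j⟧) s φ]
  refine Finset.sum_eq_zero fun j _ => ?_
  by_cases h : rr j = s
  · rw [hcc ⟨j, h⟩, hc0 ⟨j, h⟩, zero_smul, zero_comp]
  · rw [comp_vanish X hX1 (rr j) s h (φ ≫ (biproduct.π (fun j => X⟦-rr j⟧) j)⟦s⟧'), zero_comp]


end TwistAux

/-- if `X` is exceptional and `Hom(Y, X[s]) = 0` for all `s`,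
then `dim Hom(T_X(Y), T_X(Y')[r]) = dim Hom(Y, Y'[r])` for every `r ∈ ℤ`. -/
theorem dim_hom_twist_twist
    (hfin : ∀ X Y : C, (∀ r : ℤ, Module.Finite (ZMod 2) (X ⟶ Y⟦r⟧)) ∧
      {r : ℤ | ∃ f : X ⟶ Y⟦r⟧, f ≠ 0}.Finite)
    (X Y Y' T T' : C) (hX : IsExceptional X)
    (hY : ∀ (s : ℤ) (f : Y ⟶ X⟦s⟧), f = 0)
    (hT : IsTwist X Y T) (hT' : IsTwist X Y' T') (r : ℤ) :
    Module.finrank (ZMod 2) (T ⟶ T'⟦r⟧) = Module.finrank (ZMod 2) (Y ⟶ Y'⟦r⟧) := by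
  obtain ⟨hX1, -, hspan1⟩ := hX
  obtain ⟨κA, rA, fA, -, gA, hA, hdA⟩ := hT
  obtain ⟨κB, rB, fB, hbB, gB, hB, hdB⟩ := hT'
  have hdA' : Triangle.mk (TwistAux.evm X Y rA fA) gA hA ∈ distTriang C := hdA
  have hdB' : Triangle.mk (TwistAux.evm X Y' rB fB) gB hB ∈ distTriang C := hdB
  -- main vanishing : `Hom(X, T'⟦s⟧) = 0`
  have hXT' : ∀ (s : ℤ) (f : X ⟶ T'⟦s⟧), f = 0 := by
    intro s f
    have hΔs : (CategoryTheory.shiftFunctor (Triangle C) s).obj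
        (Triangle.mk (TwistAux.evm X Y' rB fB) gB hB) ∈ distTriang C :=
      Pretriangulated.Triangle.shift_distinguished _ hdB' s
    refine TwistAux.zero_obj₃ _ hΔs X ?_ ?_ f
    · intro g
      obtain ⟨φ, hφ⟩ := TwistAux.ev_surj X Y' rB fB s (hbB s).2 g
      refine ⟨φ, ?_⟩
      show φ ≫ (s.negOnePow • (TwistAux.evm X Y' rB fB)⟦s⟧') = g
      rw [TwistAux.comp_unit_smul]; exact hφ
    · intro ψ hψ
      change X ⟶ ((⨁ fun j => X⟦-rB j⟧)⟦s⟧)⟦(1:ℤ)⟧ at ψ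
      have hψ' : ψ ≫ ((TwistAux.evm X Y' rB fB)⟦s⟧')⟦(1:ℤ)⟧' = 0 := by
        rw [← TwistAux.comp_unit_smul_shift s.negOnePow ψ ((TwistAux.evm X Y' rB fB)⟦s⟧')]
        exact hψ
      have hnat := (shiftFunctorAdd C s (1:ℤ)).inv.naturality (TwistAux.evm X Y' rB fB)
      simp only [Functor.comp_map] at hnat
      have h2 : (ψ ≫ (shiftFunctorAdd C s (1:ℤ)).inv.app (⨁ fun j => X⟦-rB j⟧)) ≫
          (TwistAux.evm X Y' rB fB)⟦s + 1⟧' = 0 := by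
        rw [assoc, ← hnat, ← assoc, hψ', zero_comp]
      have h3 := TwistAux.ev_inj X Y' hX1 hspan1 rB fB (s+1) (hbB (s+1)).1 _ h2
      calc ψ = (ψ ≫ (shiftFunctorAdd C s (1:ℤ)).inv.app (⨁ fun j => X⟦-rB j⟧)) ≫
            (shiftFunctorAdd C s (1:ℤ)).hom.app (⨁ fun j => X⟦-rB j⟧) := by
            rw [assoc, Iso.inv_hom_id_app]; simp
        _ = 0 := by rw [h3, zero_comp]
  have hAm : ∀ (m : ℤ) (ψ : (⨁ fun j => X⟦-rA j⟧) ⟶ T'⟦m⟧), ψ = 0 := by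
    intro m ψ
    refine biproduct.hom_ext' _ _ fun j => ?_
    rw [comp_zero]
    exact TwistAux.vanish_shift_src hXT' (-rA j) m (biproduct.ι (fun j => X⟦-rA j⟧) j ≫ ψ)
  have hA1 : ∀ ψ : ((⨁ fun j => X⟦-rA j⟧)⟦(1:ℤ)⟧ ⟶ T'⟦r⟧), ψ = 0 :=
    fun ψ => TwistAux.vanish_shift_src hAm 1 r ψ
  have hYA : ∀ (m : ℤ) (φ : Y ⟶ (⨁ fun j => X⟦-rB j⟧)⟦m⟧), φ = 0 := fun m φ =>
    TwistAux.hom_shift_biproduct_zero _ m (fun j f => TwistAux.vanish_double hY (-rB j) m f) φ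
  have hYA1 : ∀ φ : (Y ⟶ ((⨁ fun j => X⟦-rB j⟧)⟦r⟧)⟦(1:ℤ)⟧), φ = 0 := fun φ =>
    TwistAux.vanish_double hYA r 1 φ
  have bij1 : Function.Bijective (fun f : T ⟶ T'⟦r⟧ => gA ≫ f) :=
    TwistAux.bij_precomp (Triangle.mk (TwistAux.evm X Y rA fA) gA hA) hdA' (T'⟦r⟧) (hAm r) hA1
  have hΔr : (CategoryTheory.shiftFunctor (Triangle C) r).obj
      (Triangle.mk (TwistAux.evm X Y' rB fB) gB hB) ∈ distTriang C :=
    Pretriangulated.Triangle.shift_distinguished _ hdB' r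
  have bij2 : Function.Bijective
      (fun f : Y ⟶ Y'⟦r⟧ => f ≫ ((CategoryTheory.shiftFunctor (Triangle C) r).obj
        (Triangle.mk (TwistAux.evm X Y' rB fB) gB hB)).mor₂) :=
    TwistAux.bij_postcomp _ hΔr Y (hYA r) hYA1
  let L1 : (T ⟶ T'⟦r⟧) →ₗ[ZMod 2] (Y ⟶ T'⟦r⟧) := Linear.leftComp (ZMod 2) (T'⟦r⟧) gA
  let L2 : (Y ⟶ Y'⟦r⟧) →ₗ[ZMod 2] (Y ⟶ T'⟦r⟧) :=
    Linear.rightComp (ZMod 2) Y ((CategoryTheory.shiftFunctor (Triangle C) r).obj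
        (Triangle.mk (TwistAux.evm X Y' rB fB) gB hB)).mor₂
  have e1 : (T ⟶ T'⟦r⟧) ≃ₗ[ZMod 2] (Y ⟶ T'⟦r⟧) := LinearEquiv.ofBijective L1 bij1
  have e2 : (Y ⟶ Y'⟦r⟧) ≃ₗ[ZMod 2] (Y ⟶ T'⟦r⟧) := LinearEquiv.ofBijective L2 bij2
  exact (e1.trans e2.symm).finrank_eq
end
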